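/- arXiv:alg-geom/9206005 — 7 statements merged into one kernel-verified Lean document; each statement's English description precedes it below -/
import Mathlib

section
/- Let n ≥ 1 and let M be a symmetric negative definite n × n real matrix such that M_{ik} ≥ 0 for all i ≠ k. If a vector x ∈ ℝ^n satisfies (Mx)_k ≥ 0 for every index k, then x_k ≤ 0 for every index k. -/
open Finset

/-- **Negativity lemma.** If `M` is a symmetric negative definite `n × n` real matrix with
nonnegative off-diagonal entries and `(M x)_k ≥ 0` for every `k`, then `x_k ≤ 0` for every `k`. -/
theorem negativity_lemma (n : ℕ) (hn : 1 ≤ n) (M : Matrix (Fin n) (Fin n) ℝ)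
    (hsymm : ∀ i k, M i k = M k i)
    (hnegdef : ∀ v : Fin n → ℝ, v ≠ 0 → ∑ i, ∑ k, v i * M i k * v k < 0)
    (hoffdiag : ∀ i k, i ≠ k → 0 ≤ M i k)
    (x : Fin n → ℝ) (hx : ∀ k, 0 ≤ ∑ i, M k i * x i) :
    ∀ k, x k ≤ 0 := by
  set p : Fin n → ℝ := fun i => max (x i) 0 with hpdef
  set m : Fin n → ℝ := fun i => max (-x i) 0 with hmdef
  have hp0 : ∀ i, 0 ≤ p i := fun i => le_max_right _ _
  have hm0 : ∀ i, 0 ≤ m i := fun i => le_max_right _ _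
  have hpm : ∀ i, p i * m i = 0 := by
    intro i
    rcases le_total (x i) 0 with h | h
    · simp [hpdef, max_eq_right h]
    · simp [hmdef, max_eq_right (neg_nonpos.mpr h)]
  have hxpm : ∀ i, p i = x i + m i := by
    intro i
    rcases le_total (x i) 0 with h | h
    · simp [hpdef, hmdef, max_eq_right h, max_eq_left (neg_nonneg.mpr h)]
    · simp [hpdef, hmdef, max_eq_left h, max_eq_right (neg_nonpos.mpr h)]
  have hpz : p = 0 := by
    by_contra hne
    have h1 : 0 ≤ ∑ i, ∑ k, p i * M i k * p k := by
      have key : ∀ i, ∑ k, p i * M i k * p k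
          = p i * (∑ k, M i k * x k) + ∑ k, p i * M i k * m k := by
        intro i
        rw [Finset.mul_sum, ← Finset.sum_add_distrib]
        refine Finset.sum_congr rfl fun k _ => ?_
        rw [hxpm k]; ring
      rw [Finset.sum_congr rfl fun i _ => key i]
      refine Finset.sum_nonneg fun i _ => add_nonneg ?_ ?_
      · exact mul_nonneg (hp0 i) (hx i)
      · refine Finset.sum_nonneg fun k _ => ?_
        rcases eq_or_ne i k with rfl | hik
        · have : p i * M i i * m i = M i i * (p i * m i) := by ring
          rw [this, hpm i, mul_zero]
        · exact mul_nonneg (mul_nonneg (hp0 i) (hoffdiag i k hik)) (hm0 k)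
    exact absurd (hnegdef p hne) (not_lt.mpr h1)
  intro k
  have := congrFun hpz k
  simp only [Pi.zero_apply] at this
  have : max (x k) 0 = 0 := this
  exact le_of_max_le_left this.le
end

section
/- Let Γ be a minimal elliptic weighted graph. Then every log discrepancy of Γ satisfies a_i ≤ 1; equivalently, every codiscrepancy satisfies b_i ≥ 0. -/
open Finset

/-- A weighted graph: a finite vertex set `Fin n`, genera `g`, a symmetric integer
intersection matrix `M` with nonnegative off-diagonal entries and diagonal entries `≤ -1`
(the weight of vertex `i` is `-M i i`), and an external part consisting of `s` external
components with rational coefficients `0 < b j ≤ 1` and intersection numbers `t j i`. -/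
structure WGraph where
  n : ℕ
  npos : 0 < n
  M : Matrix (Fin n) (Fin n) ℤ
  g : Fin n → ℕ
  s : ℕ
  b : Fin s → ℚ
  t : Fin s → Fin n → ℕ
  symm : ∀ i k, M i k = M k i
  offdiag_nonneg : ∀ i k, i ≠ k → 0 ≤ M i k
  diag_le : ∀ i, M i i ≤ -1
  b_pos : ∀ j, 0 < b j
  b_le_one : ∀ j, b j ≤ 1

namespace WGraph

/-- The external contribution `c_i = ∑_j b_j t_{ji}`. -/
def extc (Γ : WGraph) (i : Fin Γ.n) : ℚ := ∑ j, Γ.b j * (Γ.t j i : ℚ)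

/-- `Γ` is elliptic: its intersection matrix is negative definite. -/
def Elliptic (Γ : WGraph) : Prop :=
  ∀ v : Fin Γ.n → ℝ, v ≠ 0 → ∑ i, ∑ k, v i * (Γ.M i k : ℝ) * v k < 0

/-- `Γ` is minimal: no vertex of genus `0` and weight `1`. -/
def IsMinimal (Γ : WGraph) : Prop := ∀ i, ¬ (Γ.g i = 0 ∧ Γ.M i i = -1)

/-- `Γ` is connected: the graph with an edge `{i,k}` whenever `M i k > 0` is connected. -/
def Connected (Γ : WGraph) : Prop :=
  (SimpleGraph.fromRel (fun i k : Fin Γ.n => 0 < Γ.M i k)).Connected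

/-- `a` is the (unique, when `M` is invertible) system of log discrepancies of `Γ`:
`∑_i a_i M_{ik} = (2 g_k − 2 − M_{kk}) + c_k + ∑_i M_{ik}` for all `k`. -/
def IsDiscr (Γ : WGraph) (a : Fin Γ.n → ℝ) : Prop :=
  ∀ k, ∑ i, a i * (Γ.M i k : ℝ) =
    (2 * (Γ.g k : ℝ) - 2 - (Γ.M k k : ℝ)) + (Γ.extc k : ℝ) + ∑ i, (Γ.M i k : ℝ)

/-- `Γ` is a Du Val graph: all genera `0`, all weights `2`, empty external contribution. -/
def DuVal (Γ : WGraph) : Prop :=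
  ∀ i, Γ.g i = 0 ∧ Γ.M i i = -2 ∧ Γ.extc i = 0

/-- The minimal log discrepancy `pld` of a system of log discrepancies `a`. -/
def pld (Γ : WGraph) (a : Fin Γ.n → ℝ) : ℝ :=
  Finset.univ.inf' ⟨⟨0, Γ.npos⟩, Finset.mem_univ _⟩ a

/-- `Γ'` is a subgraph of `Γ` via the injection `e` of vertex sets:
off-diagonal entries, weights, genera and external contributions of `Γ'` are dominated by
the corresponding ones of `Γ`. -/
def SubgraphVia (Γ' Γ : WGraph) (e : Fin Γ'.n → Fin Γ.n) : Prop :=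
  Function.Injective e ∧
  (∀ i k : Fin Γ'.n, i ≠ k → Γ'.M i k ≤ Γ.M (e i) (e k)) ∧
  (∀ i, Γ.M (e i) (e i) ≤ Γ'.M i i) ∧
  (∀ i, Γ'.g i ≤ Γ.g (e i)) ∧
  (∀ i, Γ'.extc i ≤ Γ.extc (e i))

/-- The subgraph `Γ'` (via `e`) differs from `Γ`. -/
def ProperVia (Γ' Γ : WGraph) (e : Fin Γ'.n → Fin Γ.n) : Prop :=
  ¬ (Function.Surjective e ∧
     (∀ i k : Fin Γ'.n, Γ'.M i k = Γ.M (e i) (e k)) ∧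
     (∀ i, Γ'.g i = Γ.g (e i)) ∧
     (∀ i, Γ'.extc i = Γ.extc (e i)))

end WGraph

/-- Order on coefficient tuples: `B ≤ B'` iff `B` is at least as long as `B'` and
coordinatewise `B j ≤ B' j` on the common indices. -/
def TupleLE {α : Type*} [LE α] {s t : ℕ} (B : Fin s → α) (B' : Fin t → α) : Prop :=
  ∃ h : t ≤ s, ∀ j : Fin t, B (Fin.castLE h j) ≤ B' j

/-- Strict order on coefficient tuples: `B < B'` iff `B ≤ B'` and moreover `B` is strictly
longer or some coordinate inequality is strict. -/
def TupleLT {α : Type*} [Preorder α] {s t : ℕ} (B : Fin s → α) (B' : Fin t → α) : Prop :=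
  TupleLE B B' ∧ (t < s ∨ ∃ h : t ≤ s, ∃ j : Fin t, B (Fin.castLE h j) < B' j)

/-- For a minimal elliptic weighted graph, every log discrepancy satisfies
`a_i ≤ 1` (equivalently, every codiscrepancy `b_i = 1 - a_i` satisfies `b_i ≥ 0`). -/
theorem log_discrepancy_le_one (Γ : WGraph) (hmin : Γ.IsMinimal) (hell : Γ.Elliptic)
    (a : Fin Γ.n → ℝ) (ha : Γ.IsDiscr a) :
    ∀ i, a i ≤ 1 := by
  by_contra h
  push_neg at h
  obtain ⟨i0, hi0⟩ := h
  set p : Fin Γ.n → ℝ := fun i => max (a i - 1) 0 with hp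
  have hpnn : ∀ i, 0 ≤ p i := fun i => le_max_right _ _
  have hpne : p ≠ 0 := by
    intro h0
    have h1 := congrFun h0 i0
    have h2 : p i0 = max (a i0 - 1) 0 := rfl
    have h3 : a i0 - 1 ≤ p i0 := h2.ge.trans' (le_max_left _ _)
    rw [h1] at h3
    simp at h3
    linarith
  have hQ := hell p hpne
  have hc : ∀ k, (0:ℝ) ≤ (Γ.extc k : ℝ) := by
    intro k
    have h1 : (0:ℚ) ≤ Γ.extc k :=
      Finset.sum_nonneg fun j _ => mul_nonneg (Γ.b_pos j).le (Nat.cast_nonneg _)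
    exact_mod_cast h1
  have hrhs : ∀ k, (0:ℝ) ≤ (2*(Γ.g k:ℝ) - 2 - (Γ.M k k : ℝ)) + (Γ.extc k : ℝ) := by
    intro k
    have h1 : (0:ℝ) ≤ 2*(Γ.g k:ℝ) - 2 - (Γ.M k k : ℝ) := by
      rcases Nat.eq_zero_or_pos (Γ.g k) with hg | hg
      · have hM : Γ.M k k ≤ -2 := by
          have h2 := Γ.diag_le k
          have h3 := hmin k
          have h4 : ¬ (Γ.M k k = -1) := fun he => h3 ⟨hg, he⟩
          omega
        have hM' : (Γ.M k k : ℝ) ≤ -2 := by exact_mod_cast hM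
        rw [hg]
        push_cast
        linarith
      · have hg' : (1:ℝ) ≤ (Γ.g k : ℝ) := by exact_mod_cast hg
        have hM' : (Γ.M k k : ℝ) ≤ -1 := by exact_mod_cast Γ.diag_le k
        linarith
    linarith [hc k]
  have hsys : ∀ k, ∑ i, (a i - 1) * (Γ.M i k : ℝ) =
      (2*(Γ.g k:ℝ) - 2 - (Γ.M k k : ℝ)) + (Γ.extc k : ℝ) := by
    intro k
    have h1 := ha k
    have hsub : ∑ i, (a i - 1) * (Γ.M i k : ℝ)
        = ∑ i, a i * (Γ.M i k:ℝ) - ∑ i, (Γ.M i k:ℝ) := by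
      rw [← Finset.sum_sub_distrib]
      exact Finset.sum_congr rfl fun i _ => by ring
    rw [hsub, h1]; ring
  have hterm : ∀ k, 0 ≤ (∑ i, p i * (Γ.M i k : ℝ)) * p k := by
    intro k
    rcases eq_or_lt_of_le (hpnn k) with h0 | h0
    · rw [← h0, mul_zero]
    · have hk1 : 1 < a k := by
        by_contra hk
        push_neg at hk
        have hpk : p k = 0 := by
          simp only [hp]
          exact max_eq_right (by linarith)
        rw [hpk] at h0
        exact absurd h0 (lt_irrefl 0)
      have hge : ∑ i, (a i - 1) * (Γ.M i k : ℝ) ≤ ∑ i, p i * (Γ.M i k : ℝ) := by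
        apply Finset.sum_le_sum
        intro i _
        rcases eq_or_ne i k with rfl | hik
        · have hpi : p i = a i - 1 := max_eq_left (by linarith)
          rw [hpi]
        · have hM : (0:ℝ) ≤ (Γ.M i k : ℝ) := by exact_mod_cast Γ.offdiag_nonneg i k hik
          exact mul_le_mul_of_nonneg_right (le_max_left _ _) hM
      apply mul_nonneg _ (hpnn k)
      calc (0:ℝ) ≤ _ := hrhs k
        _ = _ := (hsys k).symm
        _ ≤ _ := hge
  have hnn : 0 ≤ ∑ i, ∑ k, p i * (Γ.M i k : ℝ) * p k := by
    rw [Finset.sum_comm]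
    apply Finset.sum_nonneg
    intro k _
    have h2 : ∑ i, p i * (Γ.M i k:ℝ) * p k = (∑ i, p i * (Γ.M i k:ℝ)) * p k :=
      (Finset.sum_mul _ _ _).symm
    rw [h2]
    exact hterm k
  linarith
end

section
/- Let Γ be a connected minimal elliptic weighted graph which is not a Du Val graph. Then every log discrepancy of Γ satisfies a_i < 1; equivalently, every codiscrepancy satisfies b_i > 0. -/
/-!
The codiscrepancies `b = 1 - a` satisfy `b M = -K`, where `K_k = 2 g_k - 2 - M_kk + c_k` is the
degree of the log canonical divisor on `E_k`; minimality makes `K ≥ 0`. A negative definite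
matrix with nonnegative off-diagonal entries sends no vector with a negative entry into the
nonpositive cone (test the form on the negative part of `b`), so `b ≥ 0`. If `b_i = 0`, then
`0 ≥ (b M)_i = ∑_{j ≠ i} b_j M_ji ≥ 0` forces `K_i = 0` and `b_j = 0` at every neighbour `j`.
By connectedness `b` and `K` then vanish identically, and `K = 0` on a minimal graph is the Du Val
condition.
-/

open Finset

theorem SimpleGraph.Reachable.propagate {V : Type*} {G : SimpleGraph V} {p : V → Prop}
    (hp : ∀ u v, G.Adj u v → p u → p v) {u v : V} (h : G.Reachable u v) (hu : p u) : p v := by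
  rw [SimpleGraph.reachable_iff_reflTransGen] at h
  induction h with
  | refl => exact hu
  | tail _ hadj ih => exact hp _ _ hadj ih

theorem Real.posPart_mul_negPart (x : ℝ) : x⁺ * x⁻ = 0 := by
  rcases le_total 0 x with hx | hx
  · rw [negPart_eq_zero.mpr hx, mul_zero]
  · rw [posPart_eq_zero.mpr hx, zero_mul]

namespace Matrix

variable {ι : Type*} {A : Matrix ι ι ℝ} {b : ι → ℝ}

theorem mul_apply_nonneg_of_eq_zero (hoff : ∀ i k, i ≠ k → 0 ≤ A i k) (hb : 0 ≤ b) {u : ι}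
    (hu : b u = 0) (j : ι) : 0 ≤ b j * A j u := by
  obtain rfl | hju := eq_or_ne j u
  · rw [hu, zero_mul]
  · exact mul_nonneg (hb j) (hoff j u hju)

variable [Fintype ι]

theorem nonneg_of_vecMul_nonpos (hoff : ∀ i k, i ≠ k → 0 ≤ A i k)
    (hneg : ∀ v, v ≠ 0 → v ⬝ᵥ A *ᵥ v < 0) (hb : ∀ k, (b ᵥ* A) k ≤ 0) : 0 ≤ b := by
  have hsplit : b⁻ ⬝ᵥ A *ᵥ b⁻ = b⁺ ⬝ᵥ A *ᵥ b⁻ - (b ᵥ* A) ⬝ᵥ b⁻ := by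
    nth_rw 1 [← sub_sub_cancel b⁺ b⁻, posPart_sub_negPart, sub_dotProduct, dotProduct_mulVec b]
  -- `b⁺` and `b⁻` have disjoint supports, so only off-diagonal entries of `A` contribute.
  have hcross : 0 ≤ b⁺ ⬝ᵥ A *ᵥ b⁻ := by
    refine Finset.sum_nonneg fun i _ => ?_
    simp only [mulVec, dotProduct, Finset.mul_sum]
    refine Finset.sum_nonneg fun k _ => ?_
    obtain rfl | hik := eq_or_ne i k
    · rw [mul_left_comm, Pi.posPart_apply, Pi.negPart_apply, Real.posPart_mul_negPart, mul_zero]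
    · exact mul_nonneg (posPart_nonneg _) (mul_nonneg (hoff i k hik) (negPart_nonneg _))
  have hlin : (b ᵥ* A) ⬝ᵥ b⁻ ≤ 0 :=
    Finset.sum_nonpos fun k _ => mul_nonpos_of_nonpos_of_nonneg (hb k) (negPart_nonneg _)
  by_contra hb0
  exact (hneg b⁻ (mt negPart_eq_zero.mp hb0)).not_ge (by linarith)

theorem vecMul_apply_nonneg_of_eq_zero (hoff : ∀ i k, i ≠ k → 0 ≤ A i k) (hb : 0 ≤ b) {u : ι}
    (hu : b u = 0) : 0 ≤ (b ᵥ* A) u :=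
  Finset.sum_nonneg fun j _ => mul_apply_nonneg_of_eq_zero hoff hb hu j

theorem eq_zero_of_vecMul_apply_nonpos (hoff : ∀ i k, i ≠ k → 0 ≤ A i k) (hb : 0 ≤ b) {u w : ι}
    (hu : b u = 0) (hbu : (b ᵥ* A) u ≤ 0) (hwu : 0 < A w u) : b w = 0 := by
  have hsum : ∑ j, b j * A j u = 0 :=
    le_antisymm hbu (vecMul_apply_nonneg_of_eq_zero hoff hb hu)
  have hterm := (Finset.sum_eq_zero_iff_of_nonneg fun j _ =>
    mul_apply_nonneg_of_eq_zero hoff hb hu j).mp hsum w (Finset.mem_univ w)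
  exact (mul_eq_zero.mp hterm).resolve_right hwu.ne'

end Matrix

namespace WGraph

open Matrix

variable {Γ : WGraph}

def realM (Γ : WGraph) : Matrix (Fin Γ.n) (Fin Γ.n) ℝ := Γ.M.map (↑)

/-- The degree `(K + ∑ b_j C_j) · E_k` of the log canonical divisor on the curve `E_k`,
computed by adjunction. -/
def logCanonicalDegree (Γ : WGraph) (k : Fin Γ.n) : ℝ :=
  2 * (Γ.g k : ℝ) - 2 - (Γ.M k k : ℝ) + (Γ.extc k : ℝ)

theorem extc_nonneg (k : Fin Γ.n) : 0 ≤ Γ.extc k :=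
  Finset.sum_nonneg fun j _ => mul_nonneg (Γ.b_pos j).le (Nat.cast_nonneg _)

theorem realM_nonneg_of_ne (Γ : WGraph) : ∀ i k, i ≠ k → 0 ≤ Γ.realM i k :=
  fun i k hik => Int.cast_nonneg_iff.mpr (Γ.offdiag_nonneg i k hik)

theorem realM_pos_of_adj {u w : Fin Γ.n}
    (h : (SimpleGraph.fromRel fun i k : Fin Γ.n => 0 < Γ.M i k).Adj u w) : 0 < Γ.realM w u := by
  obtain ⟨-, h | h⟩ := h
  · exact Int.cast_pos.mpr (Γ.symm u w ▸ h)
  · exact Int.cast_pos.mpr h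

theorem Elliptic.dotProduct_mulVec_neg (hell : Γ.Elliptic) {v : Fin Γ.n → ℝ} (hv : v ≠ 0) :
    v ⬝ᵥ Γ.realM *ᵥ v < 0 := by
  simpa [realM, dotProduct, mulVec, Finset.mul_sum, mul_assoc] using hell v hv

theorem IsMinimal.diag_le_neg_two (hmin : Γ.IsMinimal) {k : Fin Γ.n} (hg : Γ.g k = 0) :
    Γ.M k k ≤ -2 := by
  have hle := Γ.diag_le k
  have hne : Γ.M k k ≠ -1 := fun h => hmin k ⟨hg, h⟩
  omega

theorem one_le_logCanonicalDegree_of_genus_ne_zero {k : Fin Γ.n} (hg : Γ.g k ≠ 0) :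
    1 ≤ Γ.logCanonicalDegree k := by
  have hg1 : (1 : ℝ) ≤ Γ.g k := by exact_mod_cast Nat.one_le_iff_ne_zero.mpr hg
  have hM : (Γ.M k k : ℝ) ≤ -1 := by exact_mod_cast Γ.diag_le k
  have hc : (0 : ℝ) ≤ Γ.extc k := by exact_mod_cast extc_nonneg k
  unfold logCanonicalDegree
  linarith

theorem logCanonicalDegree_of_genus_eq_zero {k : Fin Γ.n} (hg : Γ.g k = 0) :
    Γ.logCanonicalDegree k = (-2 - Γ.M k k : ℝ) + Γ.extc k := by
  simp only [logCanonicalDegree, hg, Nat.cast_zero]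
  ring

theorem IsMinimal.logCanonicalDegree_nonneg (hmin : Γ.IsMinimal) (k : Fin Γ.n) :
    0 ≤ Γ.logCanonicalDegree k := by
  by_cases hg : Γ.g k = 0
  · have hM : (Γ.M k k : ℝ) ≤ -2 := by exact_mod_cast hmin.diag_le_neg_two hg
    have hc : (0 : ℝ) ≤ Γ.extc k := by exact_mod_cast extc_nonneg k
    rw [logCanonicalDegree_of_genus_eq_zero hg]
    linarith
  · exact zero_le_one.trans (one_le_logCanonicalDegree_of_genus_ne_zero hg)

theorem IsMinimal.duVal_of_logCanonicalDegree_eq_zero (hmin : Γ.IsMinimal)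
    (hK : ∀ k, Γ.logCanonicalDegree k = 0) : Γ.DuVal := by
  intro k
  have hg : Γ.g k = 0 := by
    by_contra hg
    linarith [hK k, one_le_logCanonicalDegree_of_genus_ne_zero hg]
  have hK0 := hK k
  have hM : (Γ.M k k : ℝ) ≤ -2 := by exact_mod_cast hmin.diag_le_neg_two hg
  have hc : (0 : ℝ) ≤ Γ.extc k := by exact_mod_cast extc_nonneg k
  rw [logCanonicalDegree_of_genus_eq_zero hg] at hK0
  refine ⟨hg, ?_, ?_⟩
  · exact_mod_cast (by linarith : (Γ.M k k : ℝ) = -2)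
  · exact_mod_cast (by linarith : (Γ.extc k : ℝ) = 0)

theorem IsDiscr.vecMul_one_sub {a : Fin Γ.n → ℝ} (ha : Γ.IsDiscr a) (k : Fin Γ.n) :
    ((1 - a) ᵥ* Γ.realM) k = -Γ.logCanonicalDegree k := by
  simp only [vecMul, dotProduct, realM, map_apply, Pi.sub_apply, Pi.one_apply, sub_mul, one_mul,
    Finset.sum_sub_distrib, ha k, logCanonicalDegree]
  ring

theorem IsDiscr.vecMul_one_sub_nonpos (hmin : Γ.IsMinimal) {a : Fin Γ.n → ℝ} (ha : Γ.IsDiscr a)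
    (k : Fin Γ.n) : ((1 - a) ᵥ* Γ.realM) k ≤ 0 := by
  rw [ha.vecMul_one_sub]
  linarith [hmin.logCanonicalDegree_nonneg k]

end WGraph

/-- For a connected minimal elliptic weighted graph that is not Du Val,
every log discrepancy satisfies `a_i < 1` (equivalently, every codiscrepancy is `> 0`). -/
theorem log_discrepancy_lt_one (Γ : WGraph) (hconn : Γ.Connected) (hmin : Γ.IsMinimal)
    (hell : Γ.Elliptic) (hnotDuVal : ¬ Γ.DuVal)
    (a : Fin Γ.n → ℝ) (ha : Γ.IsDiscr a) :
    ∀ i, a i < 1 := by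
  have hcodiscr : 0 ≤ 1 - a := Matrix.nonneg_of_vecMul_nonpos Γ.realM_nonneg_of_ne
    (fun _ => hell.dotProduct_mulVec_neg) (ha.vecMul_one_sub_nonpos hmin)
  intro i
  by_contra! hai
  have hi : (1 - a) i = 0 := le_antisymm (by simpa using hai) (hcodiscr i)
  refine hnotDuVal (hmin.duVal_of_logCanonicalDegree_eq_zero fun k => ?_)
  have hk : (1 - a) k = 0 := (hconn.preconnected i k).propagate (fun _ _ huw hu =>
    Matrix.eq_zero_of_vecMul_apply_nonpos Γ.realM_nonneg_of_ne hcodiscr hu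
      (ha.vecMul_one_sub_nonpos hmin _) (WGraph.realM_pos_of_adj huw)) hi
  have hK := Matrix.vecMul_apply_nonneg_of_eq_zero Γ.realM_nonneg_of_ne hcodiscr hk
  rw [ha.vecMul_one_sub] at hK
  linarith [hmin.logCanonicalDegree_nonneg k]
end

section
/- Let Γ be a minimal elliptic weighted graph and let c > 0 be a real number such that all log discrepancies of Γ satisfy a_i ≥ c. Then all weights of Γ are bounded above by 2/c, i.e. w_i ≤ 2/c for every vertex i. -/
open Finset

lemma WGraph.extc_nonneg_s6 (Γ : WGraph) (i : Fin Γ.n) : (0 : ℚ) ≤ Γ.extc i :=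
  Finset.sum_nonneg fun j _ => mul_nonneg (Γ.b_pos j).le (Nat.cast_nonneg _)

/-- Negative definiteness lemma: if `∑_i v_i M_{ik} ≥ 0` for all `k`, then `v ≤ 0`. -/
lemma WGraph.nonpos_of_pairing_nonneg (Γ : WGraph) (hell : Γ.Elliptic)
    (v : Fin Γ.n → ℝ) (hv : ∀ k, 0 ≤ ∑ i, v i * (Γ.M i k : ℝ)) : ∀ i, v i ≤ 0 := by
  by_contra h
  push_neg at h
  obtain ⟨i0, hi0⟩ := h
  set p : Fin Γ.n → ℝ := fun i => max (v i) 0 with hp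
  have hpne : p ≠ 0 := by
    intro h0
    have h1 : p i0 = 0 := congrFun h0 i0
    have h2 : v i0 ≤ p i0 := le_max_left _ _
    linarith
  have hQ : 0 ≤ ∑ i, ∑ k, p i * (Γ.M i k : ℝ) * p k := by
    rw [Finset.sum_comm]
    apply Finset.sum_nonneg
    intro k _
    have hterm : ∑ i, p i * (Γ.M i k : ℝ) * p k = (∑ i, p i * (Γ.M i k : ℝ)) * p k := by
      rw [Finset.sum_mul]
    rw [hterm]
    rcases eq_or_lt_of_le (le_max_right (v k) 0 : (0:ℝ) ≤ p k) with hk0 | hkpos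
    · rw [show p k = 0 from hk0.symm, mul_zero]
    · have hvk : 0 < v k := by
        by_contra hvk
        push_neg at hvk
        have h0 : v k ⊔ 0 = 0 := max_eq_right hvk
        rw [h0] at hkpos; exact lt_irrefl _ hkpos
    -- p k = v k
      have hpk : p k = v k := max_eq_left hvk.le
      have hsum : 0 ≤ ∑ i, p i * (Γ.M i k : ℝ) := by
        have hsplit : ∑ i, p i * (Γ.M i k : ℝ)
            = ∑ i, v i * (Γ.M i k : ℝ) + ∑ i, (p i - v i) * (Γ.M i k : ℝ) := by
          rw [← Finset.sum_add_distrib]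
          apply Finset.sum_congr rfl
          intro i _; ring
        rw [hsplit]
        have h2 : 0 ≤ ∑ i, (p i - v i) * (Γ.M i k : ℝ) := by
          apply Finset.sum_nonneg
          intro i _
          by_cases hik : i = k
          · subst hik; rw [hpk]; simp
          · apply mul_nonneg
            · have : v i ≤ p i := le_max_left _ _
              linarith
            · exact_mod_cast Γ.offdiag_nonneg i k hik
        linarith [hv k]
      exact mul_nonneg hsum hkpos.le
  exact absurd (hell p hpne) (not_lt.2 hQ)

/-- If all log discrepancies of a minimal elliptic weighted graph satisfy
`a_i ≥ c > 0`, then all weights `w_i = -M_{ii}` are bounded above by `2 / c`. -/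
theorem weights_bounded_of_discrepancy_bounded (Γ : WGraph) (hmin : Γ.IsMinimal)
    (hell : Γ.Elliptic) (a : Fin Γ.n → ℝ) (ha : Γ.IsDiscr a)
    (c : ℝ) (hc : 0 < c) (hac : ∀ i, c ≤ a i) :
    ∀ i, ((-Γ.M i i : ℤ) : ℝ) ≤ 2 / c := by
  -- Step 1: all log discrepancies are at most 1.
  have ha1 : ∀ i, a i ≤ 1 := by
    have key := Γ.nonpos_of_pairing_nonneg hell (fun i => a i - 1) ?_
    · intro i; have := key i; simp at this; linarith
    · intro k
      have hk := ha k
      have hsum : ∑ i, (a i - 1) * (Γ.M i k : ℝ)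
          = ∑ i, a i * (Γ.M i k : ℝ) - ∑ i, (Γ.M i k : ℝ) := by
        rw [← Finset.sum_sub_distrib]
        apply Finset.sum_congr rfl
        intro i _; ring
      rw [hsum, hk]
      have hc0 : (0 : ℝ) ≤ (Γ.extc k : ℝ) := by exact_mod_cast Γ.extc_nonneg_s6 k
      rcases Nat.eq_zero_or_pos (Γ.g k) with h0 | h1
      · have hMk : Γ.M k k ≤ -2 := by
          have h1 := Γ.diag_le k
          have h2 := hmin k
          rcases eq_or_lt_of_le h1 with he | hlt
          · exact absurd ⟨h0, he⟩ h2
          · omega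
        have hMk' : (Γ.M k k : ℝ) ≤ -2 := by exact_mod_cast hMk
        have hg : (Γ.g k : ℝ) = 0 := by exact_mod_cast h0
        rw [hg]; linarith
      · have hg : (1 : ℝ) ≤ (Γ.g k : ℝ) := by exact_mod_cast h1
        have hMk' : (Γ.M k k : ℝ) ≤ -1 := by exact_mod_cast Γ.diag_le k
        linarith
  -- Step 2: bound the weights.
  intro k
  have hMkk : (Γ.M k k : ℝ) ≤ -1 := by exact_mod_cast Γ.diag_le k
  have hkmem : k ∈ Finset.univ := Finset.mem_univ k
  have hsplitA : ∑ i, a i * (Γ.M i k : ℝ)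
      = a k * (Γ.M k k : ℝ) + ∑ i ∈ Finset.univ.erase k, a i * (Γ.M i k : ℝ) :=
    (Finset.add_sum_erase _ _ hkmem).symm
  have hsplitM : ∑ i, (Γ.M i k : ℝ)
      = (Γ.M k k : ℝ) + ∑ i ∈ Finset.univ.erase k, (Γ.M i k : ℝ) :=
    (Finset.add_sum_erase _ _ hkmem).symm
  have hk := ha k
  rw [hsplitA, hsplitM] at hk
  have hrest : ∑ i ∈ Finset.univ.erase k, a i * (Γ.M i k : ℝ)
      - ∑ i ∈ Finset.univ.erase k, (Γ.M i k : ℝ) ≤ 0 := by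
    rw [← Finset.sum_sub_distrib]
    apply Finset.sum_nonpos
    intro i hi
    have hik : i ≠ k := Finset.ne_of_mem_erase hi
    have hM : (0 : ℝ) ≤ (Γ.M i k : ℝ) := by exact_mod_cast Γ.offdiag_nonneg i k hik
    have : a i * (Γ.M i k : ℝ) - (Γ.M i k : ℝ) = (a i - 1) * (Γ.M i k : ℝ) := by ring
    rw [this]
    exact mul_nonpos_of_nonpos_of_nonneg (by linarith [ha1 i]) hM
  have hc0 : (0 : ℝ) ≤ (Γ.extc k : ℝ) := by exact_mod_cast Γ.extc_nonneg_s6 k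
  have hg0 : (0 : ℝ) ≤ (Γ.g k : ℝ) := Nat.cast_nonneg _
  have key : -(a k * (Γ.M k k : ℝ)) ≤ 2 := by linarith
  have hcast : ((-Γ.M k k : ℤ) : ℝ) = -(Γ.M k k : ℝ) := by push_cast; ring
  rw [hcast, le_div_iff₀ hc]
  have hmul : c * (-(Γ.M k k : ℝ)) ≤ a k * (-(Γ.M k k : ℝ)) :=
    mul_le_mul_of_nonneg_right (hac k) (by linarith)
  nlinarith
end

section
/- Let r ≥ 1 be an integer, let ε be a real number with 0 < ε ≤ 1, and let a_0, a_1, …, a_{r+1} be real numbers with 0 ≤ a_i ≤ 1 for all i and a_i ≥ ε for i = 1,…,r. Suppose that for every i = 1,…,r one has a_{i−1} − 2a_i + a_{i+1} = (w_i − 2)·a_i + c_i, where the w_i are reals with w_i ≥ 2 and the c_i are reals with c_i ≥ 0. Then ∑_{i=1}^{r} ((w_i − 2) + c_i) ≤ 2/ε. -/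
open Finset

lemma chain_telescope (a : ℕ → ℝ) :
    ∀ r : ℕ, 1 ≤ r →
      ∑ i ∈ Finset.Icc 1 r, (a (i - 1) - 2 * a i + a (i + 1))
        = a 0 - a 1 - a r + a (r + 1) := by
  intro r hr
  induction r with
  | zero => omega
  | succ n ih =>
    rcases Nat.eq_or_lt_of_le hr with h | h
    · simp [← h]
      ring
    · have hn : 1 ≤ n := by omega
      rw [Finset.sum_Icc_succ_top (by omega : 1 ≤ n + 1), ih hn]
      simp
      ring

/-- **chain convexity estimate.** If `a_0, …, a_{r+1} ∈ [0,1]` satisfy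
`a_{i−1} − 2 a_i + a_{i+1} = (w_i − 2) a_i + c_i` with `w_i ≥ 2`, `c_i ≥ 0`, and `a_i ≥ ε`
for `1 ≤ i ≤ r`, then `∑_{i=1}^r ((w_i − 2) + c_i) ≤ 2/ε`. -/
theorem chain_convexity_estimate (r : ℕ) (hr : 1 ≤ r) (ε : ℝ) (hε : 0 < ε) (hε1 : ε ≤ 1)
    (a w c : ℕ → ℝ)
    (ha0 : ∀ i, i ≤ r + 1 → 0 ≤ a i) (ha1 : ∀ i, i ≤ r + 1 → a i ≤ 1)
    (haε : ∀ i, 1 ≤ i → i ≤ r → ε ≤ a i)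
    (hw : ∀ i, 1 ≤ i → i ≤ r → 2 ≤ w i)
    (hc : ∀ i, 1 ≤ i → i ≤ r → 0 ≤ c i)
    (heq : ∀ i, 1 ≤ i → i ≤ r → a (i - 1) - 2 * a i + a (i + 1) = (w i - 2) * a i + c i) :
    ∑ i ∈ Finset.Icc 1 r, ((w i - 2) + c i) ≤ 2 / ε := by
  have hsum : ∑ i ∈ Finset.Icc 1 r, ((w i - 2) * a i + c i)
      = a 0 - a 1 - a r + a (r + 1) := by
    rw [← chain_telescope a r hr]
    apply Finset.sum_congr rfl
    intro i hi
    simp only [Finset.mem_Icc] at hi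
    exact (heq i hi.1 hi.2).symm
  have hle2 : ∑ i ∈ Finset.Icc 1 r, ((w i - 2) * a i + c i) ≤ 2 := by
    rw [hsum]
    have h1 := ha1 0 (by omega)
    have h2 := ha0 1 (by omega)
    have h3 := ha0 r (by omega)
    have h4 := ha1 (r + 1) le_rfl
    linarith
  have hterm : ε * ∑ i ∈ Finset.Icc 1 r, ((w i - 2) + c i)
      ≤ ∑ i ∈ Finset.Icc 1 r, ((w i - 2) * a i + c i) := by
    rw [Finset.mul_sum]
    apply Finset.sum_le_sum
    intro i hi
    simp only [Finset.mem_Icc] at hi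
    have hwi := hw i hi.1 hi.2
    have hci := hc i hi.1 hi.2
    have hai := haε i hi.1 hi.2
    have : ε * (w i - 2) ≤ (w i - 2) * a i := by
      nlinarith
    nlinarith
  rw [le_div_iff₀ hε]
  nlinarith [hterm, hle2]
end

section
/- Let s ≥ 1 be an integer and for each j = 1,…,s let (b_j^{(n)})_{n∈ℕ} be a nondecreasing sequence of positive real numbers. Then there exists a real ε > 0 such that for every n ∈ ℕ and every tuple of nonnegative integers (m_1,…,m_s): if ∑_{j=1}^{s} m_j·b_j^{(n)} > 1, then ∑_{j=1}^{s} m_j·b_j^{(n)} ≥ 1 + ε. -/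
open Finset

/-- **gap lemma.** For nondecreasing sequences of positive coefficients
`b_j^{(n)}`, there is a uniform `ε > 0` such that any nonnegative integer combination
`∑_j m_j b_j^{(n)}` which exceeds `1` in fact exceeds `1 + ε`. -/
theorem gap_lemma (s : ℕ) (hs : 1 ≤ s) (b : ℕ → Fin s → ℝ)
    (hpos : ∀ n j, 0 < b n j) (hmono : ∀ n j, b n j ≤ b (n + 1) j) :
    ∃ ε : ℝ, 0 < ε ∧ ∀ (n : ℕ) (m : Fin s → ℕ),
      1 < ∑ j, (m j : ℝ) * b n j → 1 + ε ≤ ∑ j, (m j : ℝ) * b n j := by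
  classical
  set f : (Fin s → ℕ) → ℕ → ℝ := fun m n => ∑ j, (m j : ℝ) * b n j with hf
  have hbmono : ∀ j, Monotone fun n => b n j := fun j =>
    monotone_nat_of_le_succ fun n => hmono n j
  have hfmono : ∀ m, Monotone (f m) := by
    intro m n n' hnn'
    refine Finset.sum_le_sum fun j _ => ?_
    exact mul_le_mul_of_nonneg_left (hbmono j hnn') (Nat.cast_nonneg _)
  set N : Fin s → ℕ := fun j => ⌈(2 : ℝ) / b 0 j⌉₊ with hN
  set M : Finset (Fin s → ℕ) := Fintype.piFinset fun j => Finset.range (N j + 1) with hM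
  set g : (Fin s → ℕ) → ℝ := fun m =>
    if h : ∃ n, 1 < f m n then f m (Nat.find h) - 1 else 1 with hg
  have hgpos : ∀ m, 0 < g m := by
    intro m
    by_cases h : ∃ n, 1 < f m n
    · have := Nat.find_spec h
      simp only [hg, dif_pos h]
      linarith
    · simp [hg, dif_neg h]
  refine ⟨min 1 (M.fold min 1 g), ?_, ?_⟩
  · refine lt_min one_pos ?_
    rw [Finset.lt_fold_min]
    exact ⟨one_pos, fun m _ => hgpos m⟩
  · intro n m hlt
    by_cases h2 : f m n ≤ 2
    · have hmM : m ∈ M := by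
        rw [hM, Fintype.mem_piFinset]
        intro j
        rw [Finset.mem_range, Nat.lt_succ_iff]
        have hterm : (m j : ℝ) * b n j ≤ f m n := by
          refine Finset.single_le_sum (f := fun j => (m j : ℝ) * b n j) ?_ (Finset.mem_univ j)
          intro i _
          exact mul_nonneg (Nat.cast_nonneg _) (hpos n i).le
        have h0 : (m j : ℝ) * b 0 j ≤ 2 := by
          have := mul_le_mul_of_nonneg_left (hbmono j (Nat.zero_le n)) (Nat.cast_nonneg (m j))
          linarith
        have hdiv : (m j : ℝ) ≤ 2 / b 0 j := (le_div_iff₀ (hpos 0 j)).mpr h0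
        have : (m j : ℝ) ≤ (N j : ℝ) := hdiv.trans (Nat.le_ceil _)
        exact_mod_cast this
      have hex : ∃ k, 1 < f m k := ⟨n, hlt⟩
      have hgeq : g m = f m (Nat.find hex) - 1 := by
        simp only [hg, dif_pos hex]
      have hfind : Nat.find hex ≤ n := Nat.find_le hlt
      have hle : f m (Nat.find hex) ≤ f m n := hfmono m hfind
      have hεle : min 1 (M.fold min 1 g) ≤ g m := by
        refine (min_le_right _ _).trans ?_
        exact (Finset.fold_min_le _).mpr (Or.inr ⟨m, hmM, le_refl _⟩)
      rw [hgeq] at hεle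
      linarith
    · push_neg at h2
      have : min 1 (M.fold min 1 g) ≤ 1 := min_le_left _ _
      linarith
end

section
/- Let s ≥ 1 be an integer. There is no sequence (b^{(n)})_{n∈ℕ} of s-tuples of real numbers with 0 < b_j^{(n)} ≤ 1, nondecreasing in each coordinate (b_j^{(n)} ≤ b_j^{(n+1)} for all j, n) and with b^{(n)} ≠ b^{(n+1)} for every n, such that for every n there exist an integer r ≥ 1, positive integers k_1,…,k_r, and nonnegative integers (l_{ij})_{1≤i≤r, 1≤j≤s} satisfying: (a) for every j, ∑_{i=1}^{r} l_{ij} ≥ 1; (b) for every i, ∑_{j=1}^{s} l_{ij}·b_j^{(n)} ≤ 1; and (c) ∑_{i=1}^{r} (k_i − 1 + ∑_{j=1}^{s} l_{ij}·b_j^{(n)}) / k_i = 2. -/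
open Finset

/-!
Record the data at a point `P` as the row `(k_P, l_P) ∈ ℕ × ℕ^s` and order rows coordinatewise.
This is a well-quasi-order (Dickson), so by Higman's lemma there are `n < m` such that the rows
of step `n` embed, in order, into larger rows of step `m`. The coefficient
`(k - 1 + c)/k = 1 - (1 - c)/k` is nonnegative, nondecreasing in `k` while `c ≤ 1`, and strictly
increasing in `c`. Hence passing from step `n` to step `m` decreases no term, adds only
nonnegative terms, and strictly raises the term of a point through a component `B_j` with
`b_j^{(n)} < b_j^{(m)}`: the two sums cannot both be `2`.
-/

theorem List.SublistForall₂.sum_map_le_sum_map {α M : Type*} [AddCommMonoid M] [PartialOrder M]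
    [IsOrderedAddMonoid M] {R : α → α → Prop} {f : α → M} {l₁ l₂ : List α}
    (h : List.SublistForall₂ R l₁ l₂) (hf : ∀ a ∈ l₁, ∀ b ∈ l₂, R a b → f a ≤ f b)
    (h₀ : ∀ b ∈ l₂, 0 ≤ f b) : (l₁.map f).sum ≤ (l₂.map f).sum := by
  induction h with
  | nil => exact List.sum_nonneg (by simpa using h₀)
  | cons hab _ ih =>
    simp only [List.map_cons, List.sum_cons, List.forall_mem_cons] at hf h₀ ⊢
    exact add_le_add (hf.1.1 hab) (ih (fun a ha b hb => (hf.2 a ha).2 b hb) h₀.2)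
  | cons_right _ ih =>
    simp only [List.map_cons, List.sum_cons, List.forall_mem_cons] at hf h₀ ⊢
    exact (ih (fun a ha b hb => (hf a ha).2 b hb) h₀.2).trans (le_add_of_nonneg_left h₀.1)

theorem List.exists_lt_sublistForall₂ {α : Type*} [Preorder α] [WellQuasiOrderedLE α]
    (f : ℕ → List α) : ∃ m n, m < n ∧ List.SublistForall₂ (· ≤ ·) (f m) (f n) :=
  ((Set.isPWO_of_wellQuasiOrderedLE Set.univ).partiallyWellOrderedOn_sublistForall₂
    (· ≤ ·)).exists_lt fun _ _ _ => trivial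

noncomputable def adjunctionCoeff (k c : ℝ) : ℝ := (k - 1 + c) / k

lemma adjunctionCoeff_nonneg {k c : ℝ} (hk : 1 ≤ k) (hc : 0 ≤ c) : 0 ≤ adjunctionCoeff k c :=
  div_nonneg (by linarith) (by linarith)

lemma adjunctionCoeff_strictMono {k : ℝ} (hk : 0 < k) : StrictMono (adjunctionCoeff k) :=
  fun _ _ hc => div_lt_div_of_pos_right (by linarith) hk

lemma adjunctionCoeff_le_adjunctionCoeff {k k' c c' : ℝ} (hk : 0 < k) (hkk : k ≤ k')
    (hcc : c ≤ c') (hc' : c' ≤ 1) : adjunctionCoeff k c ≤ adjunctionCoeff k' c' := by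
  have hk' : 0 < k' := hk.trans_le hkk
  have key : (1 - c') / k' ≤ (1 - c) / k := div_le_div₀ (by linarith) (by linarith) hk hkk
  have h₁ : adjunctionCoeff k c = 1 - (1 - c) / k := by
    unfold adjunctionCoeff; field_simp; ring
  have h₂ : adjunctionCoeff k' c' = 1 - (1 - c') / k' := by
    unfold adjunctionCoeff; field_simp; ring
  linarith

section Rows

variable {ι : Type*} [Fintype ι]

def rowWeight (b : ι → ℝ) (l : ι → ℕ) : ℝ := ∑ j, (l j : ℝ) * b j

lemma rowWeight_nonneg {b : ι → ℝ} (hb : 0 ≤ b) (l : ι → ℕ) : 0 ≤ rowWeight b l :=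
  sum_nonneg fun j _ => mul_nonneg (Nat.cast_nonneg _) (hb j)

lemma rowWeight_le_rowWeight {b b' : ι → ℝ} {l l' : ι → ℕ} (hb : 0 ≤ b) (hbb : b ≤ b')
    (hll : l ≤ l') : rowWeight b l ≤ rowWeight b' l' :=
  sum_le_sum fun j _ => mul_le_mul (Nat.cast_le.mpr (hll j)) (hbb j) (hb j) (Nat.cast_nonneg _)

lemma rowWeight_lt_rowWeight {b b' : ι → ℝ} {l : ι → ℕ} (hbb : b ≤ b') {j : ι}
    (hj : l j ≠ 0) (hbj : b j < b' j) : rowWeight b l < rowWeight b' l :=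
  sum_lt_sum (fun i _ => mul_le_mul_of_nonneg_left (hbb i) (Nat.cast_nonneg _))
    ⟨j, mem_univ j, mul_lt_mul_of_pos_left hbj (Nat.cast_pos.mpr (Nat.pos_of_ne_zero hj))⟩

noncomputable def rowCoeff (b : ι → ℝ) (x : ℕ × (ι → ℕ)) : ℝ :=
  adjunctionCoeff x.1 (rowWeight b x.2)

/-- A list of rows `(k_P, l_P)`, one for each point `P`, satisfying conditions (a)–(c). -/
def IsAdjunctionDatum (b : ι → ℝ) (xs : List (ℕ × (ι → ℕ))) : Prop :=
  (∀ x ∈ xs, 1 ≤ x.1 ∧ rowWeight b x.2 ≤ 1) ∧ (∀ j, ∃ x ∈ xs, x.2 j ≠ 0) ∧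
    (xs.map (rowCoeff b)).sum = 2

lemma isAdjunctionDatum_ofFn {b : ι → ℝ} {r : ℕ} (k : Fin r → ℕ) (l : Fin r → ι → ℕ)
    (hk : ∀ i, 1 ≤ k i) (hatt : ∀ j, 1 ≤ ∑ i, l i j) (hle : ∀ i, ∑ j, (l i j : ℝ) * b j ≤ 1)
    (hsum : ∑ i, ((k i : ℝ) - 1 + ∑ j, (l i j : ℝ) * b j) / (k i : ℝ) = 2) :
    IsAdjunctionDatum b (List.ofFn fun i => (k i, l i)) := by
  refine ⟨?_, fun j => ?_, ?_⟩
  · simp only [List.mem_ofFn, forall_exists_index]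
    rintro _ i rfl
    exact ⟨hk i, hle i⟩
  · obtain ⟨i, -, hi⟩ := exists_ne_zero_of_sum_ne_zero (Nat.one_le_iff_ne_zero.mp (hatt j))
    exact ⟨_, List.mem_ofFn.mpr ⟨i, rfl⟩, hi⟩
  · rw [List.map_ofFn, List.sum_ofFn]
    exact hsum

lemma IsAdjunctionDatum.not_sublistForall₂ {b b' : ι → ℝ} {xs ys : List (ℕ × (ι → ℕ))}
    (hb : 0 ≤ b) (hbb : b < b') (hxs : IsAdjunctionDatum b xs) (hys : IsAdjunctionDatum b' ys) :
    ¬ List.SublistForall₂ (· ≤ ·) xs ys := by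
  intro hdom
  obtain ⟨hbb', j, hj⟩ := Pi.lt_def.mp hbb
  obtain ⟨x, hx, hxj⟩ := hxs.2.1 j
  have hk : ∀ x ∈ xs, (0 : ℝ) < x.1 := fun x hx => by exact_mod_cast (hxs.1 x hx).1
  have raise_b : (xs.map (rowCoeff b)).sum < (xs.map (rowCoeff b')).sum :=
    List.sum_lt_sum _ _
      (fun x hx => (adjunctionCoeff_strictMono (hk x hx)).monotone
        (rowWeight_le_rowWeight hb hbb' le_rfl))
      ⟨x, hx, adjunctionCoeff_strictMono (hk x hx) (rowWeight_lt_rowWeight hbb' hxj hj)⟩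
  have raise_rows : (xs.map (rowCoeff b')).sum ≤ (ys.map (rowCoeff b')).sum :=
    hdom.sum_map_le_sum_map
      (fun x hx y hy hxy => adjunctionCoeff_le_adjunctionCoeff (hk x hx)
        (Nat.cast_le.mpr hxy.1) (rowWeight_le_rowWeight (hb.trans hbb') le_rfl hxy.2)
        (hys.1 y hy).2)
      (fun y hy => adjunctionCoeff_nonneg (Nat.one_le_cast.mpr (hys.1 y hy).1)
        (rowWeight_nonneg (hb.trans hbb') _))
  linarith [hxs.2.2, hys.2.2]

end Rows

theorem one_dimensional_acc_general (s : ℕ) :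
    ¬ ∃ b : ℕ → Fin s → ℝ,
      (∀ n j, 0 < b n j) ∧ (∀ n j, b n j ≤ 1) ∧
      (∀ n j, b n j ≤ b (n + 1) j) ∧ (∀ n, b n ≠ b (n + 1)) ∧
      (∀ n, ∃ (r : ℕ) (_ : 1 ≤ r) (k : Fin r → ℕ) (l : Fin r → Fin s → ℕ),
        (∀ i, 1 ≤ k i) ∧
        (∀ j, 1 ≤ ∑ i, l i j) ∧
        (∀ i, ∑ j, (l i j : ℝ) * b n j ≤ 1) ∧
        ∑ i, ((k i : ℝ) - 1 + ∑ j, (l i j : ℝ) * b n j) / (k i : ℝ) = 2) := by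
  rintro ⟨b, hpos, -, hstep, hne, hdata⟩
  have hb : StrictMono b := strictMono_nat_of_lt_succ fun n => lt_of_le_of_ne (hstep n) (hne n)
  choose r _ k l hk hatt hle hsum using hdata
  have hdatum n := isAdjunctionDatum_ofFn (k n) (l n) (hk n) (hatt n) (hle n) (hsum n)
  obtain ⟨n, m, hnm, hdom⟩ :=
    List.exists_lt_sublistForall₂ fun n => List.ofFn fun i => (k n i, l n i)
  exact (hdatum n).not_sublistForall₂ (fun j => (hpos n j).le) (hb hnm) (hdatum m) hdom

/-- **one-dimensional ascending chain condition.** There is no strictly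
increasing (coordinatewise nondecreasing and never equal) sequence of coefficient tuples
`b^{(n)} ∈ (0,1]^s` such that for every `n` the log adjunction identity
`∑_i (k_i − 1 + ∑_j l_{ij} b_j^{(n)})/k_i = 2` holds for some `r ≥ 1`, positive integers
`k_i`, and nonnegative integers `l_{ij}` with every component attached (`∑_i l_{ij} ≥ 1`)
and each local coefficient `∑_j l_{ij} b_j^{(n)} ≤ 1`. -/
theorem one_dimensional_acc (s : ℕ) (hs : 1 ≤ s) :
    ¬ ∃ b : ℕ → Fin s → ℝ,
      (∀ n j, 0 < b n j) ∧ (∀ n j, b n j ≤ 1) ∧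
      (∀ n j, b n j ≤ b (n + 1) j) ∧ (∀ n, b n ≠ b (n + 1)) ∧
      (∀ n, ∃ (r : ℕ) (_ : 1 ≤ r) (k : Fin r → ℕ) (l : Fin r → Fin s → ℕ),
        (∀ i, 1 ≤ k i) ∧
        (∀ j, 1 ≤ ∑ i, l i j) ∧
        (∀ i, ∑ j, (l i j : ℝ) * b n j ≤ 1) ∧
        ∑ i, ((k i : ℝ) - 1 + ∑ j, (l i j : ℝ) * b n j) / (k i : ℝ) = 2) :=
  one_dimensional_acc_general s
end
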